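/- arXiv:2205.00639 — 7 statements merged into one kernel-verified Lean document; each statement's English description precedes it below -/
import Mathlib

section
/- Let m and n be finite types with n nonempty. Let A : Matrix m m ℝ, B : Matrix m n ℝ, C : Matrix n m ℝ and D : Matrix n n ℝ satisfy A *ᵥ 1 = a • 1, B *ᵥ 1 = b • 1, C *ᵥ 1 = c • 1, D *ᵥ 1 = d • 1 (each 1 being the all-ones vector of the appropriate size), and suppose D is invertible. Then the Schur complement A − B * D⁻¹ * C has constant row sums a − b * d⁻¹ * c, i.e. (A − B * D⁻¹ * C) *ᵥ 1 = (a − b * d⁻¹ * c) • 1. -/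
open scoped Matrix

theorem schur_complement_constant_row_sum
    {m n : Type*} [Fintype m] [Fintype n] [DecidableEq n] [Nonempty n]
    (A : Matrix m m ℝ) (B : Matrix m n ℝ) (C : Matrix n m ℝ) (D : Matrix n n ℝ)
    (a b c d : ℝ)
    (hA : A *ᵥ 1 = a • 1) (hB : B *ᵥ 1 = b • 1)
    (hC : C *ᵥ 1 = c • 1) (hD : D *ᵥ 1 = d • 1)
    (hDinv : IsUnit D) :
    (A - B * D⁻¹ * C) *ᵥ 1 = (a - b * d⁻¹ * c) • 1 := by
  have hinv : D⁻¹ * D = 1 := Matrix.nonsing_inv_mul D ((Matrix.isUnit_iff_isUnit_det D).mp hDinv)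
  have h1 : D⁻¹ *ᵥ (D *ᵥ (1 : n → ℝ)) = 1 := by
    rw [Matrix.mulVec_mulVec, hinv, Matrix.one_mulVec]
  rw [hD, Matrix.mulVec_smul] at h1
  have hd : d ≠ 0 := by
    intro h
    subst h
    simp at h1
  have hDi : D⁻¹ *ᵥ (1 : n → ℝ) = d⁻¹ • 1 := by
    have := congrArg (fun v => d⁻¹ • v) h1
    simpa [smul_smul, inv_mul_cancel₀ hd] using this
  rw [Matrix.sub_mulVec, hA, ← Matrix.mulVec_mulVec, ← Matrix.mulVec_mulVec, hC,
    Matrix.mulVec_smul, hDi, smul_smul, Matrix.mulVec_smul, hB, smul_smul, sub_smul]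
  ring_nf
end

section
/- Let m and n be nonempty finite types. Let A : Matrix m m ℝ, B : Matrix m n ℝ, C : Matrix n m ℝ and D : Matrix n n ℝ satisfy A *ᵥ 1 = a • 1, B *ᵥ 1 = b • 1, C *ᵥ 1 = c • 1, D *ᵥ 1 = d • 1. Suppose D is invertible and the Schur complement S := A − B * D⁻¹ * C is invertible. Then S⁻¹ *ᵥ 1 = (a − b * d⁻¹ * c)⁻¹ • 1. -/
open scoped Matrix

lemma inv_constant_row_sum_aux {k : Type*} [Fintype k] [DecidableEq k] [Nonempty k]
    (M : Matrix k k ℝ) (s : ℝ) (hM : M *ᵥ 1 = s • 1) (hMinv : IsUnit M) :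
    M⁻¹ *ᵥ 1 = s⁻¹ • 1 := by
  have : Invertible M := hMinv.invertible
  have hinj : Function.Injective M.mulVec :=
    Matrix.mulVec_injective_of_invertible M
  have hs : s ≠ 0 := by
    intro h
    subst h
    have : M *ᵥ 1 = M *ᵥ 0 := by simp [hM]
    have := hinj this
    have h1 : (1 : k → ℝ) = 0 := this
    have := congrFun h1 (Classical.arbitrary k)
    simp at this
  have key : M⁻¹ *ᵥ (M *ᵥ 1) = 1 := by
    rw [Matrix.mulVec_mulVec, Matrix.nonsing_inv_mul M ((Matrix.isUnit_iff_isUnit_det M).mp hMinv)]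
    simp
  rw [hM, Matrix.mulVec_smul] at key
  have := congrArg (fun v => s⁻¹ • v) key
  simpa [smul_smul, inv_mul_cancel₀ hs] using this

theorem schur_complement_inv_constant_row_sum
    {m n : Type*} [Fintype m] [Fintype n] [DecidableEq m] [DecidableEq n]
    [Nonempty m] [Nonempty n]
    (A : Matrix m m ℝ) (B : Matrix m n ℝ) (C : Matrix n m ℝ) (D : Matrix n n ℝ)
    (a b c d : ℝ)
    (hA : A *ᵥ 1 = a • 1) (hB : B *ᵥ 1 = b • 1)
    (hC : C *ᵥ 1 = c • 1) (hD : D *ᵥ 1 = d • 1)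
    (hDinv : IsUnit D) (hSinv : IsUnit (A - B * D⁻¹ * C)) :
    (A - B * D⁻¹ * C)⁻¹ *ᵥ 1 = (a - b * d⁻¹ * c)⁻¹ • 1 := by
  have hDi : D⁻¹ *ᵥ 1 = d⁻¹ • 1 := inv_constant_row_sum_aux D d hD hDinv
  have hS : (A - B * D⁻¹ * C) *ᵥ 1 = (a - b * d⁻¹ * c) • 1 := by
    rw [Matrix.sub_mulVec, hA]
    rw [← Matrix.mulVec_mulVec, ← Matrix.mulVec_mulVec, hC, Matrix.mulVec_smul, hDi,
      smul_smul, Matrix.mulVec_smul, hB, smul_smul, sub_smul]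
    ring_nf
  exact inv_constant_row_sum_aux _ _ hS hSinv
end

section
/- Let m and n be nonempty finite types. Let A : Matrix m m ℝ, B : Matrix m n ℝ, C : Matrix n m ℝ and D : Matrix n n ℝ satisfy A *ᵥ 1 = a • 1, B *ᵥ 1 = b • 1, C *ᵥ 1 = c • 1, D *ᵥ 1 = d • 1. Suppose D is invertible and the Schur complement S := A − B * D⁻¹ * C is invertible, and set s := a − b * d⁻¹ * c. Then the matrix −(D⁻¹ * C * S⁻¹) : Matrix n m ℝ has constant row sums −(d⁻¹ * c * s⁻¹), i.e. (−(D⁻¹ * C * S⁻¹)) *ᵥ 1 = (−(d⁻¹ * c * s⁻¹)) • 1. -/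
open scoped Matrix

lemma inv_const_row_sum {k : Type*} [Fintype k] [DecidableEq k] [Nonempty k]
    (M : Matrix k k ℝ) (s : ℝ) (h : M *ᵥ 1 = s • 1) (hM : IsUnit M) :
    M⁻¹ *ᵥ 1 = s⁻¹ • 1 := by
  have key : (1 : k → ℝ) = s • (M⁻¹ *ᵥ 1) := by
    have := congrArg (fun v => M⁻¹ *ᵥ v) h
    simpa [Matrix.mulVec_mulVec,
      Matrix.nonsing_inv_mul M ((Matrix.isUnit_iff_isUnit_det M).mp hM),
      Matrix.mulVec_smul, eq_comm] using this
  have hs : s ≠ 0 := by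
    intro hs0
    have := congrFun key (Classical.arbitrary k)
    simp [hs0] at this
  have : M⁻¹ *ᵥ 1 = s⁻¹ • (s • (M⁻¹ *ᵥ 1)) := by
    rw [smul_smul, inv_mul_cancel₀ hs, one_smul]
  rw [this, ← key]

theorem block_inverse_lower_left_constant_row_sum
    {m n : Type*} [Fintype m] [Fintype n] [DecidableEq m] [DecidableEq n]
    [Nonempty m] [Nonempty n]
    (A : Matrix m m ℝ) (B : Matrix m n ℝ) (C : Matrix n m ℝ) (D : Matrix n n ℝ)
    (a b c d : ℝ)
    (hA : A *ᵥ 1 = a • 1) (hB : B *ᵥ 1 = b • 1)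
    (hC : C *ᵥ 1 = c • 1) (hD : D *ᵥ 1 = d • 1)
    (hDinv : IsUnit D) (hSinv : IsUnit (A - B * D⁻¹ * C)) :
    (-(D⁻¹ * C * (A - B * D⁻¹ * C)⁻¹)) *ᵥ 1
      = (-(d⁻¹ * c * (a - b * d⁻¹ * c)⁻¹)) • 1 := by
  have hDi : D⁻¹ *ᵥ 1 = d⁻¹ • 1 := inv_const_row_sum D d hD hDinv
  have hS : (A - B * D⁻¹ * C) *ᵥ 1 = (a - b * d⁻¹ * c) • 1 := by
    rw [Matrix.sub_mulVec, hA, Matrix.mul_assoc, ← Matrix.mulVec_mulVec,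
      ← Matrix.mulVec_mulVec, hC, Matrix.mulVec_smul, hDi, smul_smul,
      Matrix.mulVec_smul, hB, smul_smul, sub_smul]
    ring_nf
  have hSi : (A - B * D⁻¹ * C)⁻¹ *ᵥ 1 = (a - b * d⁻¹ * c)⁻¹ • 1 :=
    inv_const_row_sum _ _ hS hSinv
  rw [Matrix.neg_mulVec, ← Matrix.mulVec_mulVec, ← Matrix.mulVec_mulVec, hSi]
  simp only [Matrix.mulVec_smul, hC, hDi, smul_smul]
  ring_nf
  rw [neg_smul]
end

section
/- Let m and n be nonempty finite types. Let A : Matrix m m ℝ, B : Matrix m n ℝ, C : Matrix n m ℝ and D : Matrix n n ℝ satisfy A *ᵥ 1 = a • 1, B *ᵥ 1 = b • 1, C *ᵥ 1 = c • 1, D *ᵥ 1 = d • 1. Suppose D is invertible and the Schur complement S := A − B * D⁻¹ * C is invertible, and set s := a − b * d⁻¹ * c. Then the matrix −(S⁻¹ * B * D⁻¹) : Matrix m n ℝ has constant row sums −(s⁻¹ * b * d⁻¹), i.e. (−(S⁻¹ * B * D⁻¹)) *ᵥ 1 = (−(s⁻¹ * b * d⁻¹)) • 1. -/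
open scoped Matrix

lemma inv_rowsum {n : Type*} [Fintype n] [DecidableEq n] [Nonempty n]
    (D : Matrix n n ℝ) (d : ℝ) (hD : D *ᵥ 1 = d • 1) (hDinv : IsUnit D) :
    D⁻¹ *ᵥ 1 = d⁻¹ • 1 := by
  have hd : d ≠ 0 := by
    intro h
    subst h
    have h1 : (1 : n → ℝ) = 0 := by
      have := congrArg (D⁻¹ *ᵥ ·) hD
      simpa [Matrix.mulVec_mulVec, Matrix.nonsing_inv_mul D
        ((Matrix.isUnit_iff_isUnit_det D).mp hDinv)] using this
    have := congrFun h1 (Classical.arbitrary n)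
    simp at this
  have h1 : D⁻¹ *ᵥ (D *ᵥ 1) = 1 := by
    rw [Matrix.mulVec_mulVec, Matrix.nonsing_inv_mul D
      ((Matrix.isUnit_iff_isUnit_det D).mp hDinv), Matrix.one_mulVec]
  rw [hD, Matrix.mulVec_smul] at h1
  calc D⁻¹ *ᵥ 1 = d⁻¹ • (d • (D⁻¹ *ᵥ 1)) := by
        rw [smul_smul, inv_mul_cancel₀ hd, one_smul]
    _ = d⁻¹ • 1 := by rw [h1]

theorem block_inverse_upper_right_constant_row_sum
    {m n : Type*} [Fintype m] [Fintype n] [DecidableEq m] [DecidableEq n]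
    [Nonempty m] [Nonempty n]
    (A : Matrix m m ℝ) (B : Matrix m n ℝ) (C : Matrix n m ℝ) (D : Matrix n n ℝ)
    (a b c d : ℝ)
    (hA : A *ᵥ 1 = a • 1) (hB : B *ᵥ 1 = b • 1)
    (hC : C *ᵥ 1 = c • 1) (hD : D *ᵥ 1 = d • 1)
    (hDinv : IsUnit D) (hSinv : IsUnit (A - B * D⁻¹ * C)) :
    (-((A - B * D⁻¹ * C)⁻¹ * B * D⁻¹)) *ᵥ 1
      = (-((a - b * d⁻¹ * c)⁻¹ * b * d⁻¹)) • 1 := by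
  have hDi := inv_rowsum D d hD hDinv
  have hS : (A - B * D⁻¹ * C) *ᵥ 1 = (a - b * d⁻¹ * c) • 1 := by
    rw [Matrix.sub_mulVec, hA, ← Matrix.mulVec_mulVec, ← Matrix.mulVec_mulVec,
      hC, Matrix.mulVec_smul, hDi, Matrix.mulVec_smul, Matrix.mulVec_smul, hB]
    ext i
    simp [sub_smul, smul_smul]
    ring
  have hSi := inv_rowsum _ _ hS hSinv
  rw [Matrix.neg_mulVec, ← Matrix.mulVec_mulVec, ← Matrix.mulVec_mulVec,
    hDi, Matrix.mulVec_smul, hB, Matrix.mulVec_smul, Matrix.mulVec_smul, hSi]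
  ext i
  simp [smul_smul]
  ring
end

section
/- Let m and n be nonempty finite types. Let A : Matrix m m ℝ, B : Matrix m n ℝ, C : Matrix n m ℝ and D : Matrix n n ℝ satisfy A *ᵥ 1 = a • 1, B *ᵥ 1 = b • 1, C *ᵥ 1 = c • 1, D *ᵥ 1 = d • 1. Suppose D is invertible and the Schur complement S := A − B * D⁻¹ * C is invertible, and set s := a − b * d⁻¹ * c. Then the matrix D⁻¹ + D⁻¹ * C * S⁻¹ * B * D⁻¹ : Matrix n n ℝ has constant row sums d⁻¹ + d⁻¹ * c * s⁻¹ * b * d⁻¹, i.e. (D⁻¹ + D⁻¹ * C * S⁻¹ * B * D⁻¹) *ᵥ 1 = (d⁻¹ + d⁻¹ * c * s⁻¹ * b * d⁻¹) • 1. -/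
open scoped Matrix

lemma inv_mulVec_one_aux {n : Type*} [Fintype n] [DecidableEq n] [Nonempty n]
    (M : Matrix n n ℝ) (t : ℝ) (hM : IsUnit M) (h : M *ᵥ 1 = t • 1) :
    M⁻¹ *ᵥ 1 = t⁻¹ • 1 := by
  have hinv : M⁻¹ * M = 1 := Matrix.nonsing_inv_mul M ((Matrix.isUnit_iff_isUnit_det M).mp hM)
  have h1 : (1 : n → ℝ) = t • (M⁻¹ *ᵥ 1) := by
    calc (1 : n → ℝ) = (M⁻¹ * M) *ᵥ 1 := by rw [hinv, Matrix.one_mulVec]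
    _ = M⁻¹ *ᵥ (M *ᵥ 1) := by rw [Matrix.mulVec_mulVec]
    _ = M⁻¹ *ᵥ (t • 1) := by rw [h]
    _ = t • (M⁻¹ *ᵥ 1) := by rw [Matrix.mulVec_smul]
  have ht : t ≠ 0 := by
    rintro rfl
    simp only [zero_smul] at h1
    have := congrFun h1 (Classical.arbitrary n)
    simp at this
  have := congrArg (fun v => t⁻¹ • v) h1
  simpa [smul_smul, inv_mul_cancel₀ ht] using this.symm

theorem block_inverse_lower_right_constant_row_sum
    {m n : Type*} [Fintype m] [Fintype n] [DecidableEq m] [DecidableEq n]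
    [Nonempty m] [Nonempty n]
    (A : Matrix m m ℝ) (B : Matrix m n ℝ) (C : Matrix n m ℝ) (D : Matrix n n ℝ)
    (a b c d : ℝ)
    (hA : A *ᵥ 1 = a • 1) (hB : B *ᵥ 1 = b • 1)
    (hC : C *ᵥ 1 = c • 1) (hD : D *ᵥ 1 = d • 1)
    (hDinv : IsUnit D) (hSinv : IsUnit (A - B * D⁻¹ * C)) :
    (D⁻¹ + D⁻¹ * C * (A - B * D⁻¹ * C)⁻¹ * B * D⁻¹) *ᵥ 1
      = (d⁻¹ + d⁻¹ * c * (a - b * d⁻¹ * c)⁻¹ * b * d⁻¹) • 1 := by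
  have hDi : D⁻¹ *ᵥ 1 = d⁻¹ • 1 := inv_mulVec_one_aux D d hDinv hD
  have hS : (A - B * D⁻¹ * C) *ᵥ 1 = (a - b * d⁻¹ * c) • 1 := by
    simp only [Matrix.sub_mulVec, ← Matrix.mulVec_mulVec, hC, Matrix.mulVec_smul, hDi, hB,
      hA, smul_smul, ← sub_smul]
    ring_nf
  have hSi : (A - B * D⁻¹ * C)⁻¹ *ᵥ 1 = (a - b * d⁻¹ * c)⁻¹ • 1 :=
    inv_mulVec_one_aux _ _ hSinv hS
  simp only [Matrix.add_mulVec, ← Matrix.mulVec_mulVec, hDi, Matrix.mulVec_smul, hB, hSi, hC,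
    smul_smul, ← add_smul]
  ring_nf
end

section
/- Let m and n be nonempty finite types. Let A : Matrix m m ℝ, B : Matrix m n ℝ, C : Matrix n m ℝ and D : Matrix n n ℝ satisfy A *ᵥ 1 = a • 1, B *ᵥ 1 = b • 1, C *ᵥ 1 = c • 1, D *ᵥ 1 = d • 1. Suppose D is invertible and the Schur complement S := A − B * D⁻¹ * C is invertible, and set s := a − b * d⁻¹ * c. Let G := Matrix.fromBlocks A B C D. Then G is invertible and G⁻¹ *ᵥ (Sum.elim 0 1) = Sum.elim ((−(s⁻¹ * b * d⁻¹)) • 1) ((d⁻¹ + d⁻¹ * c * s⁻¹ * b * d⁻¹) • 1), where Sum.elim 0 1 denotes the vector on m ⊕ n that equals 0 on the first block and 1 on the second block. -/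
open scoped Matrix

theorem block_matrix_inv_mulVec_elim_zero_one
    {m n : Type*} [Fintype m] [Fintype n] [DecidableEq m] [DecidableEq n]
    [Nonempty m] [Nonempty n]
    (A : Matrix m m ℝ) (B : Matrix m n ℝ) (C : Matrix n m ℝ) (D : Matrix n n ℝ)
    (a b c d : ℝ)
    (hA : A *ᵥ 1 = a • 1) (hB : B *ᵥ 1 = b • 1)
    (hC : C *ᵥ 1 = c • 1) (hD : D *ᵥ 1 = d • 1)
    (hDinv : IsUnit D) (hSinv : IsUnit (A - B * D⁻¹ * C)) :
    IsUnit (Matrix.fromBlocks A B C D) ∧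
      (Matrix.fromBlocks A B C D)⁻¹ *ᵥ (Sum.elim (0 : m → ℝ) (1 : n → ℝ))
        = Sum.elim ((-((a - b * d⁻¹ * c)⁻¹ * b * d⁻¹)) • (1 : m → ℝ))
            ((d⁻¹ + d⁻¹ * c * (a - b * d⁻¹ * c)⁻¹ * b * d⁻¹) • (1 : n → ℝ)) := by
  haveI := hDinv.invertible
  haveI := hSinv.invertible
  have hDD : D⁻¹ * D = 1 :=
    Matrix.nonsing_inv_mul D ((Matrix.isUnit_iff_isUnit_det D).mp hDinv)
  -- d ≠ 0
  have hd : d ≠ 0 := by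
    intro h
    have h1 : (1 : n → ℝ) = 0 := by
      calc (1 : n → ℝ) = (D⁻¹ * D) *ᵥ 1 := by rw [hDD, Matrix.one_mulVec]
        _ = D⁻¹ *ᵥ (D *ᵥ 1) := by rw [Matrix.mulVec_mulVec]
        _ = 0 := by rw [hD, h, zero_smul, Matrix.mulVec_zero]
    exact one_ne_zero (congrFun h1 (Classical.arbitrary n))
  -- D⁻¹ *ᵥ 1 = d⁻¹ • 1
  have hDinv1 : D⁻¹ *ᵥ (1 : n → ℝ) = d⁻¹ • 1 := by
    have h2 : d • (D⁻¹ *ᵥ (1 : n → ℝ)) = 1 := by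
      rw [← Matrix.mulVec_smul, ← hD, Matrix.mulVec_mulVec, hDD, Matrix.one_mulVec]
    calc D⁻¹ *ᵥ (1 : n → ℝ) = d⁻¹ • (d • (D⁻¹ *ᵥ 1)) := by
          rw [smul_smul, inv_mul_cancel₀ hd, one_smul]
      _ = d⁻¹ • 1 := by rw [h2]
  -- Schur complement row sums
  have hS : (A - B * D⁻¹ * C) *ᵥ 1 = (a - b * d⁻¹ * c) • 1 := by
    rw [Matrix.sub_mulVec, hA, ← Matrix.mulVec_mulVec, ← Matrix.mulVec_mulVec, hC,
      Matrix.mulVec_smul, hDinv1, smul_smul, Matrix.mulVec_smul, hB, smul_smul, ← sub_smul]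
    congr 1
    ring
  have hSS : (A - B * D⁻¹ * C)⁻¹ * (A - B * D⁻¹ * C) = 1 :=
    Matrix.nonsing_inv_mul _ ((Matrix.isUnit_iff_isUnit_det _).mp hSinv)
  have hs : (a - b * d⁻¹ * c) ≠ 0 := by
    intro h
    have h1 : (1 : m → ℝ) = 0 := by
      calc (1 : m → ℝ) = ((A - B * D⁻¹ * C)⁻¹ * (A - B * D⁻¹ * C)) *ᵥ 1 := by
            rw [hSS, Matrix.one_mulVec]
        _ = (A - B * D⁻¹ * C)⁻¹ *ᵥ ((A - B * D⁻¹ * C) *ᵥ 1) := by rw [Matrix.mulVec_mulVec]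
        _ = 0 := by rw [hS, h, zero_smul, Matrix.mulVec_zero]
    exact one_ne_zero (congrFun h1 (Classical.arbitrary m))
  -- G is invertible
  haveI : Invertible (A - B * ⅟D * C) := by
    rw [Matrix.invOf_eq_nonsing_inv]; exact hSinv.invertible
  haveI hGinv : Invertible (Matrix.fromBlocks A B C D) := Matrix.fromBlocks₂₂Invertible A B C D
  refine ⟨isUnit_of_invertible _, ?_⟩
  have key : Matrix.fromBlocks A B C D *ᵥ
      (Sum.elim ((-((a - b * d⁻¹ * c)⁻¹ * b * d⁻¹)) • (1 : m → ℝ))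
        ((d⁻¹ + d⁻¹ * c * (a - b * d⁻¹ * c)⁻¹ * b * d⁻¹) • (1 : n → ℝ)))
      = Sum.elim (0 : m → ℝ) (1 : n → ℝ) := by
    rw [Matrix.fromBlocks_mulVec]
    simp only [Sum.elim_comp_inl, Sum.elim_comp_inr]
    rw [Matrix.mulVec_smul, Matrix.mulVec_smul, Matrix.mulVec_smul, Matrix.mulVec_smul,
      hA, hB, hC, hD, smul_smul, smul_smul, smul_smul, smul_smul, ← add_smul, ← add_smul,
      show -((a - b * d⁻¹ * c)⁻¹ * b * d⁻¹) * a
          + (d⁻¹ + d⁻¹ * c * (a - b * d⁻¹ * c)⁻¹ * b * d⁻¹) * b = (0 : ℝ) by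
        linear_combination (-(d⁻¹ * b)) * inv_mul_cancel₀ hs,
      show -((a - b * d⁻¹ * c)⁻¹ * b * d⁻¹) * c
          + (d⁻¹ + d⁻¹ * c * (a - b * d⁻¹ * c)⁻¹ * b * d⁻¹) * d = (1 : ℝ) by
        linear_combination (1 + (a - b * d⁻¹ * c)⁻¹ * b * d⁻¹ * c) * inv_mul_cancel₀ hd,
      zero_smul, one_smul]
  calc (Matrix.fromBlocks A B C D)⁻¹ *ᵥ (Sum.elim (0 : m → ℝ) (1 : n → ℝ))
      = (Matrix.fromBlocks A B C D)⁻¹ *ᵥ (Matrix.fromBlocks A B C D *ᵥ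
          (Sum.elim ((-((a - b * d⁻¹ * c)⁻¹ * b * d⁻¹)) • (1 : m → ℝ))
            ((d⁻¹ + d⁻¹ * c * (a - b * d⁻¹ * c)⁻¹ * b * d⁻¹) • (1 : n → ℝ)))) := by rw [key]
    _ = ((Matrix.fromBlocks A B C D)⁻¹ * Matrix.fromBlocks A B C D) *ᵥ _ := by
        rw [Matrix.mulVec_mulVec]
    _ = _ := by
        rw [Matrix.nonsing_inv_mul _ ((Matrix.isUnit_iff_isUnit_det _).mp
          (isUnit_of_invertible _)), Matrix.one_mulVec]
end

section
/- Let m and n be nonempty finite types. Let A : Matrix m m ℝ, B : Matrix m n ℝ, C : Matrix n m ℝ and D : Matrix n n ℝ satisfy A *ᵥ 1 = a • 1, B *ᵥ 1 = b • 1, C *ᵥ 1 = c • 1, D *ᵥ 1 = d • 1. Suppose D is invertible and the Schur complement S := A − B * D⁻¹ * C is invertible, and set s := a − b * d⁻¹ * c. Let G := Matrix.fromBlocks A B C D and let μab, μba : ℝ, and write w := G⁻¹ *ᵥ (Sum.elim (fun _ => μab) (fun _ => μba)). Then w = Sum.elim (fun _ => s⁻¹ * μab − s⁻¹ * b * d⁻¹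 * μba) (fun _ => −(d⁻¹ * c * s⁻¹) * μab + (d⁻¹ + d⁻¹ * c * s⁻¹ * b * d⁻¹) * μba); in particular for every i, i' : m, w (Sum.inl i) = w (Sum.inl i'), and for every j, j' : n, w (Sum.inr j) = w (Sum.inr j'). -/
open scoped Matrix

theorem block_matrix_inv_mulVec_blockwise_explicit
    {m n : Type*} [Fintype m] [Fintype n] [DecidableEq m] [DecidableEq n]
    [Nonempty m] [Nonempty n]
    (A : Matrix m m ℝ) (B : Matrix m n ℝ) (C : Matrix n m ℝ) (D : Matrix n n ℝ)
    (a b c d : ℝ)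
    (hA : A *ᵥ 1 = a • 1) (hB : B *ᵥ 1 = b • 1)
    (hC : C *ᵥ 1 = c • 1) (hD : D *ᵥ 1 = d • 1)
    (hDinv : IsUnit D) (hSinv : IsUnit (A - B * D⁻¹ * C))
    (μab μba : ℝ) :
    (Matrix.fromBlocks A B C D)⁻¹ *ᵥ (Sum.elim (fun _ => μab) (fun _ => μba))
        = Sum.elim
            (fun _ => (a - b * d⁻¹ * c)⁻¹ * μab
              - (a - b * d⁻¹ * c)⁻¹ * b * d⁻¹ * μba)
            (fun _ => -(d⁻¹ * c * (a - b * d⁻¹ * c)⁻¹) * μab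
              + (d⁻¹ + d⁻¹ * c * (a - b * d⁻¹ * c)⁻¹ * b * d⁻¹) * μba) ∧
      (∀ i i' : m,
        ((Matrix.fromBlocks A B C D)⁻¹ *ᵥ (Sum.elim (fun _ => μab) (fun _ => μba)))
            (Sum.inl i)
          = ((Matrix.fromBlocks A B C D)⁻¹ *ᵥ (Sum.elim (fun _ => μab) (fun _ => μba)))
            (Sum.inl i')) ∧
      (∀ j j' : n,
        ((Matrix.fromBlocks A B C D)⁻¹ *ᵥ (Sum.elim (fun _ => μab) (fun _ => μba)))
            (Sum.inr j)
          = ((Matrix.fromBlocks A B C D)⁻¹ *ᵥ (Sum.elim (fun _ => μab) (fun _ => μba)))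
            (Sum.inr j')) := by
  classical
  letI : Invertible D := hDinv.invertible
  -- basic facts
  have hone_m : (1 : m → ℝ) ≠ 0 := by
    intro h
    have := congrFun h (Classical.arbitrary m)
    simp at this
  have hone_n : (1 : n → ℝ) ≠ 0 := by
    intro h
    have := congrFun h (Classical.arbitrary n)
    simp at this
  have hDmul : D⁻¹ * D = 1 := Matrix.nonsing_inv_mul D ((Matrix.isUnit_iff_isUnit_det D).mp hDinv)
  have hd : d ≠ 0 := by
    intro h
    apply hone_n
    have h1 : D⁻¹ *ᵥ (D *ᵥ (1 : n → ℝ)) = (1 : n → ℝ) := by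
      rw [Matrix.mulVec_mulVec, hDmul, Matrix.one_mulVec]
    rw [hD, h, zero_smul, Matrix.mulVec_zero] at h1
    exact h1.symm
  have hDi : D⁻¹ *ᵥ (1 : n → ℝ) = d⁻¹ • 1 := by
    have h1 : D⁻¹ *ᵥ (D *ᵥ (1 : n → ℝ)) = (1 : n → ℝ) := by
      rw [Matrix.mulVec_mulVec, hDmul, Matrix.one_mulVec]
    rw [hD, Matrix.mulVec_smul] at h1
    calc D⁻¹ *ᵥ (1 : n → ℝ) = (d⁻¹ * d) • (D⁻¹ *ᵥ (1 : n → ℝ)) := by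
          rw [inv_mul_cancel₀ hd, one_smul]
      _ = d⁻¹ • (d • (D⁻¹ *ᵥ (1 : n → ℝ))) := by rw [mul_smul]
      _ = d⁻¹ • (1 : n → ℝ) := by rw [h1]
  set S : Matrix m m ℝ := A - B * D⁻¹ * C with hS
  set s : ℝ := a - b * d⁻¹ * c with hs
  have hSone : S *ᵥ (1 : m → ℝ) = s • 1 := by
    rw [hS, Matrix.sub_mulVec, hA, ← Matrix.mulVec_mulVec, ← Matrix.mulVec_mulVec,
      hC, Matrix.mulVec_smul, hDi, smul_smul, Matrix.mulVec_smul, hB, smul_smul,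
      hs, sub_smul]
    ring_nf
  have hSmul : S⁻¹ * S = 1 := Matrix.nonsing_inv_mul S ((Matrix.isUnit_iff_isUnit_det S).mp hSinv)
  have hsne : s ≠ 0 := by
    intro h
    apply hone_m
    have h1 : S⁻¹ *ᵥ (S *ᵥ (1 : m → ℝ)) = (1 : m → ℝ) := by
      rw [Matrix.mulVec_mulVec, hSmul, Matrix.one_mulVec]
    rw [hSone, h, zero_smul, Matrix.mulVec_zero] at h1
    exact h1.symm
  -- the block matrix is invertible
  letI : Invertible S := hSinv.invertible
  letI : Invertible (A - B * ⅟D * C) := by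
    rw [Matrix.invOf_eq_nonsing_inv]; exact hSinv.invertible
  letI : Invertible (Matrix.fromBlocks A B C D) :=
    Matrix.fromBlocks₂₂Invertible A B C D
  set G := Matrix.fromBlocks A B C D with hG
  have hGunit : IsUnit G := isUnit_of_invertible G
  -- candidate solution
  set x : ℝ := s⁻¹ * μab - s⁻¹ * b * d⁻¹ * μba with hx
  set y : ℝ := -(d⁻¹ * c * s⁻¹) * μab + (d⁻¹ + d⁻¹ * c * s⁻¹ * b * d⁻¹) * μba with hy
  have key : G *ᵥ (Sum.elim (fun _ => x) (fun _ => y) : m ⊕ n → ℝ)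
      = Sum.elim (fun _ => μab) (fun _ => μba) := by
    rw [hG, Matrix.fromBlocks_mulVec]
    have hxl : (Sum.elim (fun _ => x) (fun _ => y) : m ⊕ n → ℝ) ∘ Sum.inl
        = x • (1 : m → ℝ) := by funext i; simp
    have hxr : (Sum.elim (fun _ => x) (fun _ => y) : m ⊕ n → ℝ) ∘ Sum.inr
        = y • (1 : n → ℝ) := by funext j; simp
    rw [hxl, hxr, Matrix.mulVec_smul, Matrix.mulVec_smul, Matrix.mulVec_smul,
      Matrix.mulVec_smul, hA, hB, hC, hD]
    have hss : s⁻¹ * s = 1 := inv_mul_cancel₀ hsne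
    have hdd : d⁻¹ * d = 1 := inv_mul_cancel₀ hd
    have h1 : x * a + y * b = μab := by
      rw [hx, hy]; linear_combination (μab - μba * b * d⁻¹) * hss
    have h2 : x * c + y * d = μba := by
      rw [hx, hy]
      linear_combination (-(μab * s⁻¹ * c) + μba * (1 + d⁻¹ * c * s⁻¹ * b)) * hdd
    funext ij
    rcases ij with i | j
    · simpa [smul_smul, mul_comm] using h1
    · simpa [smul_smul, mul_comm] using h2
  have hmain : G⁻¹ *ᵥ (Sum.elim (fun _ => μab) (fun _ => μba))
      = Sum.elim (fun _ => x) (fun _ => y) := by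
    rw [← key, Matrix.mulVec_mulVec, Matrix.nonsing_inv_mul G ((Matrix.isUnit_iff_isUnit_det G).mp hGunit),
      Matrix.one_mulVec]
  have hmain' : G⁻¹ *ᵥ (Sum.elim (fun _ => μab) (fun _ => μba))
      = Sum.elim
          (fun _ => (a - b * d⁻¹ * c)⁻¹ * μab - (a - b * d⁻¹ * c)⁻¹ * b * d⁻¹ * μba)
          (fun _ => -(d⁻¹ * c * (a - b * d⁻¹ * c)⁻¹) * μab
            + (d⁻¹ + d⁻¹ * c * (a - b * d⁻¹ * c)⁻¹ * b * d⁻¹) * μba) := hmain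
  refine ⟨hmain', ?_, ?_⟩
  · intro i i'; rw [hmain']; simp
  · intro j j'; rw [hmain']; simp
end
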